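/- arXiv:2006.16288 — 2 statements merged into one kernel-verified Lean document; each statement's English description precedes it below -/
import Mathlib

section
/- Let b = t^η v ∈ W̃ with η ∈ Q^∨ and v ∈ W, and set ν := A_v η and 𝒯_ν := ν + ker A_v. Suppose that ker A_v ∩ R^∨ ⊆ (I − v)R^∨. Then the W̃-conjugacy class of b is equal to the union over u ∈ W of the sets { t^ξ (u v u⁻¹) : ξ ∈ (u 𝒯_ν) ∩ (η + R^∨) }; that is, the W̃-conjugacy class of b fills out the transverse subspaces. -/
/-!
Conjugating `t^η v` by `t^{u y} u` gives `t^{u (y + η - v y)} (u v u⁻¹)`. The vector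
`x = y + η - v y` has `A_v x = A_v η` because `A_v ∘ v = A_v`, and `x - η = y - v y` lies in `R^∨`
because `W` acts trivially on `Q^∨ / R^∨`; applying `u` does not change the class of `x` modulo
`R^∨` either. Conversely, for `ξ = u x` in the union, `x - η` lies in `ker A_v ∩ R^∨`, so the
hypothesis writes it as `r - v r`, and conjugating by `t^{u r} u` produces `t^ξ (u v u⁻¹)`.
-/

open scoped RealInnerProductSpace

namespace ADLV

variable {V : Type*} [NormedAddCommGroup V] [InnerProductSpace ℝ V]

/-- The coroot `α^∨ = 2α/(α,α)` of a root `α`. -/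
noncomputable def coroot (α : V) : V := (2 / ⟪α, α⟫) • α

/-- The reflection `s_α : x ↦ x - ⟨α, x⟩ α^∨` in the hyperplane orthogonal to `α`,
as a linear automorphism. -/
noncomputable def sRefl (α : V) (hα : α ≠ 0) : V ≃ₗ[ℝ] V :=
  Module.reflection (f := (innerSL ℝ α : V →ₗ[ℝ] ℝ)) (x := coroot α)
    (by
      have h : ⟪α, α⟫ ≠ 0 := inner_self_ne_zero.mpr hα
      simp [coroot, real_inner_smul_right]
      field_simp)

/-- The averaging operator `A_w = (1/m)(I + w + w² + ⋯ + w^{m-1})`. -/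
noncomputable def avgProj (m : ℕ) (w : V ≃ₗ[ℝ] V) : V →ₗ[ℝ] V :=
  (m : ℝ)⁻¹ • ∑ i ∈ Finset.range m, ((w ^ i : V ≃ₗ[ℝ] V) : V →ₗ[ℝ] V)

/-- The (finite) Weyl group: the group generated by the simple reflections. -/
noncomputable def weylGroup {n : ℕ} (α : Fin n → V) (hα : ∀ j, α j ≠ 0) :
    Subgroup (V ≃ₗ[ℝ] V) :=
  Subgroup.closure (Set.range fun j => sRefl (α j) (hα j))

/-- The coroot lattice `R^∨ = ⊕_j ℤ α_j^∨`. -/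
noncomputable def corootLattice {n : ℕ} (α : Fin n → V) : AddSubgroup V :=
  AddSubgroup.closure (Set.range fun j => coroot (α j))

/-- The coweight lattice `Q^∨ = {x : ⟨α_j, x⟩ ∈ ℤ for all j}`. -/
def coweightLattice {n : ℕ} (α : Fin n → V) : Set V :=
  {x : V | ∀ j, ∃ m : ℤ, ⟪α j, x⟫ = (m : ℝ)}

/-- Elements `t^μ u` of the (extended) affine Weyl group `Q^∨ ⋊ W`, realized inside the
semidirect product `V ⋊ GL(V)` with multiplication `(t^μ u)(t^λ v) = t^{μ + uλ}(uv)`. -/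
@[ext]
structure Aff (V : Type*) [NormedAddCommGroup V] [InnerProductSpace ℝ V] where
  /-- the translation part -/
  t : V
  /-- the linear part -/
  w : V ≃ₗ[ℝ] V

namespace Aff

instance : Mul (Aff V) := ⟨fun a b => ⟨a.t + a.w b.t, a.w * b.w⟩⟩
instance : One (Aff V) := ⟨⟨0, 1⟩⟩
instance : Inv (Aff V) := ⟨fun a => ⟨-(a.w⁻¹ a.t), a.w⁻¹⟩⟩

@[simp] lemma mul_t (a b : Aff V) : (a * b).t = a.t + a.w b.t := rfl
@[simp] lemma mul_w (a b : Aff V) : (a * b).w = a.w * b.w := rfl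
@[simp] lemma one_t : (1 : Aff V).t = 0 := rfl
@[simp] lemma one_w : (1 : Aff V).w = 1 := rfl
@[simp] lemma inv_t (a : Aff V) : (a⁻¹).t = -(a.w⁻¹ a.t) := rfl
@[simp] lemma inv_w (a : Aff V) : (a⁻¹).w = a.w⁻¹ := rfl

lemma mul_apply_w (f g : V ≃ₗ[ℝ] V) (x : V) : (f * g) x = f (g x) := rfl

instance : Group (Aff V) where
  mul_assoc a b c := by
    refine Aff.ext ?_ ?_
    · simp [mul_apply_w, map_add, add_assoc]
    · simp [mul_assoc]
  one_mul a := by refine Aff.ext ?_ ?_ <;> simp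
  mul_one a := by refine Aff.ext ?_ ?_ <;> simp
  inv_mul_cancel a := by
    refine Aff.ext ?_ ?_
    · simp [mul_apply_w]
    · simp

end Aff

section Averaging

variable {m : ℕ} {w : V ≃ₗ[ℝ] V}

lemma avgProj_apply (m : ℕ) (w : V ≃ₗ[ℝ] V) (x : V) :
    avgProj m w x = (m : ℝ)⁻¹ • ∑ i ∈ Finset.range m, (w ^ i) x := by
  simp [avgProj]

lemma avgProj_apply_apply (hw : w ^ m = 1) (x : V) : avgProj m w (w x) = avgProj m w x := by
  rw [avgProj_apply, avgProj_apply]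
  congr 1
  calc ∑ i ∈ Finset.range m, (w ^ i) (w x)
      = ∑ i ∈ Finset.range m, (w ^ (i + 1)) x := by simp [pow_succ]
    _ = ∑ i ∈ Finset.range m, (w ^ i) x := by
      rw [← sub_eq_zero, ← Finset.sum_sub_distrib,
        Finset.sum_range_sub (fun i => (w ^ i) x), hw, pow_zero, sub_self]

lemma avgProj_apply_pow_apply (hw : w ^ m = 1) (i : ℕ) (x : V) :
    avgProj m w ((w ^ i) x) = avgProj m w x := by
  induction i generalizing x with
  | zero => rfl
  | succ i ih => rw [pow_succ, LinearEquiv.mul_apply, ih, avgProj_apply_apply hw]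

lemma avgProj_avgProj (hw : w ^ m = 1) (x : V) :
    avgProj m w (avgProj m w x) = avgProj m w x := by
  conv_lhs => rw [avgProj_apply m w x]
  simp only [map_smul, map_sum, avgProj_apply_pow_apply hw, Finset.sum_const,
    Finset.card_range, ← Nat.cast_smul_eq_nsmul ℝ]
  rw [avgProj_apply, smul_smul, smul_smul]
  congr 1
  simpa using mul_inv_mul_cancel (m : ℝ)⁻¹

lemma sub_avgProj_mem_ker_iff (hw : w ^ m = 1) (x y : V) :
    x - avgProj m w y ∈ LinearMap.ker (avgProj m w) ↔ avgProj m w x = avgProj m w y := by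
  rw [LinearMap.mem_ker, map_sub, avgProj_avgProj hw, sub_eq_zero]

end Averaging

section Lattices

variable {n : ℕ} {α : Fin n → V}

lemma add_mem_coweightLattice {x y : V} (hx : x ∈ coweightLattice α)
    (hy : y ∈ coweightLattice α) : x + y ∈ coweightLattice α := fun j => by
  obtain ⟨p, hp⟩ := hx j
  obtain ⟨q, hq⟩ := hy j
  exact ⟨p + q, by rw [inner_add_right, hp, hq, Int.cast_add]⟩

lemma mem_coweightLattice_of_mem_corootLattice
    (hcart : ∀ k j, ∃ m : ℤ, ⟪α k, coroot (α j)⟫ = (m : ℝ)) {x : V}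
    (hx : x ∈ corootLattice α) : x ∈ coweightLattice α := by
  induction hx using AddSubgroup.closure_induction with
  | mem _ hx => obtain ⟨j, rfl⟩ := hx; exact fun k => hcart k j
  | zero => exact fun j => ⟨0, by simp⟩
  | add _ _ _ _ hx hy => exact add_mem_coweightLattice hx hy
  | neg _ _ hx =>
    intro j
    obtain ⟨p, hp⟩ := hx j
    exact ⟨-p, by rw [inner_neg_right, hp, Int.cast_neg]⟩

lemma mem_coweightLattice_of_sub_mem_corootLattice
    (hcart : ∀ k j, ∃ m : ℤ, ⟪α k, coroot (α j)⟫ = (m : ℝ)) {x y : V}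
    (hy : y ∈ coweightLattice α) (hxy : x - y ∈ corootLattice α) : x ∈ coweightLattice α := by
  simpa using add_mem_coweightLattice hy (mem_coweightLattice_of_mem_corootLattice hcart hxy)

end Lattices

lemma sub_sRefl_apply (a : V) (ha : a ≠ 0) (x : V) : x - sRefl a ha x = ⟪a, x⟫ • coroot a := by
  rw [sRefl, Module.reflection_apply, sub_sub_cancel]
  rfl

lemma sRefl_inv (a : V) (ha : a ≠ 0) : (sRefl a ha)⁻¹ = sRefl a ha :=
  Module.reflection_inv _

section WeylGroup

variable {n : ℕ} {α : Fin n → V} {hα : ∀ j, α j ≠ 0}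

lemma sub_sRefl_apply_mem_corootLattice (j : Fin n) {x : V} (hx : x ∈ coweightLattice α) :
    x - sRefl (α j) (hα j) x ∈ corootLattice α := by
  obtain ⟨p, hp⟩ := hx j
  rw [sub_sRefl_apply, hp, Int.cast_smul_eq_zsmul]
  exact zsmul_mem (AddSubgroup.subset_closure (Set.mem_range_self j)) p

theorem sub_apply_mem_corootLattice (hcart : ∀ k j, ∃ m : ℤ, ⟪α k, coroot (α j)⟫ = (m : ℝ))
    {w : V ≃ₗ[ℝ] V} (hw : w ∈ weylGroup α hα) {x : V} (hx : x ∈ coweightLattice α) :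
    x - w x ∈ corootLattice α := by
  induction hw using Subgroup.closure_induction'' generalizing x with
  | mem _ hs => obtain ⟨j, rfl⟩ := hs; exact sub_sRefl_apply_mem_corootLattice j hx
  | inv_mem _ hs =>
    obtain ⟨j, rfl⟩ := hs
    rw [sRefl_inv]
    exact sub_sRefl_apply_mem_corootLattice j hx
  | one => simp
  | mul a b _ _ iha ihb =>
    have hbx : b x ∈ coweightLattice α := mem_coweightLattice_of_sub_mem_corootLattice hcart hx
      (by simpa using neg_mem (ihb hx))
    simpa using add_mem (ihb hx) (iha hbx)

theorem apply_mem_coweightLattice (hcart : ∀ k j, ∃ m : ℤ, ⟪α k, coroot (α j)⟫ = (m : ℝ))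
    {w : V ≃ₗ[ℝ] V} (hw : w ∈ weylGroup α hα) {x : V} (hx : x ∈ coweightLattice α) :
    w x ∈ coweightLattice α :=
  mem_coweightLattice_of_sub_mem_corootLattice hcart hx
    (by simpa using neg_mem (sub_apply_mem_corootLattice hcart hw hx))

theorem apply_sub_mem_corootLattice_iff
    (hcart : ∀ k j, ∃ m : ℤ, ⟪α k, coroot (α j)⟫ = (m : ℝ))
    {w : V ≃ₗ[ℝ] V} (hw : w ∈ weylGroup α hα) {x : V} (hx : x ∈ coweightLattice α) (y : V) :
    w x - y ∈ corootLattice α ↔ x - y ∈ corootLattice α := by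
  have hxw := sub_apply_mem_corootLattice hcart hw hx
  rw [← sub_add_sub_cancel x (w x) y, add_mem_cancel_left hxw]

end WeylGroup

lemma Aff.mk_conj (u v : V ≃ₗ[ℝ] V) (y η : V) :
    Aff.mk (u y) u * Aff.mk η v * (Aff.mk (u y) u)⁻¹ = Aff.mk (u (y + η - v y)) (u * v * u⁻¹) := by
  ext1
  · simp only [Aff.mul_t, Aff.mul_w, Aff.inv_t, LinearEquiv.mul_apply, map_neg, map_sub, map_add,
      LinearEquiv.coe_inv, LinearEquiv.symm_apply_apply]
    abel
  · rfl

theorem conjugacy_class_fills_out_transverse_subspaces_general {n : ℕ}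
    (α : Fin n → V) (hα : ∀ j, α j ≠ 0)
    -- crystallographic: the Cartan integers `⟨α_k, α_j^∨⟩` are integers
    (hcart : ∀ k j, ∃ m : ℤ, ⟪α k, coroot (α j)⟫ = (m : ℝ))
    (η : V) (hη : η ∈ coweightLattice α)
    (v : V ≃ₗ[ℝ] V) (hvW : v ∈ weylGroup α hα)
    (m : ℕ) (hord : orderOf v = m)
    -- the hypothesis `ker A_v ∩ R^∨ ⊆ (I - v) R^∨`
    (hcond : ∀ x ∈ LinearMap.ker (avgProj m v), x ∈ corootLattice α →
        ∃ r ∈ corootLattice α, x = r - v r) :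
    {z : Aff V | ∃ μ ∈ coweightLattice α, ∃ u ∈ weylGroup α hα,
        z = Aff.mk μ u * Aff.mk η v * (Aff.mk μ u)⁻¹}
      = ⋃ u ∈ (weylGroup α hα : Set (V ≃ₗ[ℝ] V)),
          {z : Aff V | ∃ ξ,
            ξ ∈ ⇑u '' {x : V | x - avgProj m v η ∈ LinearMap.ker (avgProj m v)} ∧
            ξ - η ∈ corootLattice α ∧
            z = Aff.mk ξ (u * v * u⁻¹)} := by
  have hv : v ^ m = 1 := hord ▸ pow_orderOf_eq_one v
  ext z
  simp only [Set.mem_ofPred_eq, Set.mem_iUnion, SetLike.mem_coe, exists_prop,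
    sub_avgProj_mem_ker_iff hv]
  constructor
  · rintro ⟨μ, hμ, u, hu, rfl⟩
    obtain ⟨y, rfl⟩ : ∃ y, μ = u y := ⟨u⁻¹ μ, by simp⟩
    have hy : y ∈ coweightLattice α := by
      simpa using apply_mem_coweightLattice hcart (inv_mem hu) hμ
    have hxη : y + η - v y - η ∈ corootLattice α := by
      rw [add_sub_right_comm, add_sub_cancel_right]
      exact sub_apply_mem_corootLattice hcart hvW hy
    have hx := mem_coweightLattice_of_sub_mem_corootLattice hcart hη hxη
    refine ⟨u, hu, _, ⟨_, ?_, rfl⟩, (apply_sub_mem_corootLattice_iff hcart hu hx η).2 hxη,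
      Aff.mk_conj u v y η⟩
    simp only [Set.mem_ofPred_eq, map_sub, map_add, avgProj_apply_apply hv,
      add_sub_cancel_left]
  · rintro ⟨u, hu, _, ⟨x, hAx, rfl⟩, hξη, rfl⟩
    have hx : x ∈ coweightLattice α := by
      simpa using apply_mem_coweightLattice hcart (inv_mem hu)
        (mem_coweightLattice_of_sub_mem_corootLattice hcart hη hξη)
    obtain ⟨r, hr, hxr⟩ := hcond (x - η) (by rw [LinearMap.mem_ker, map_sub, hAx, sub_self])
      ((apply_sub_mem_corootLattice_iff hcart hu hx η).1 hξη)
    refine ⟨u r, apply_mem_coweightLattice hcart hu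
      (mem_coweightLattice_of_mem_corootLattice hcart hr), u, hu, ?_⟩
    rw [Aff.mk_conj, ← sub_add_cancel x η, hxr, add_sub_right_comm]

/-- Let `b = t^η v ∈ W̃` with `η ∈ Q^∨` and `v ∈ W`; set `ν := A_v η` and
`𝒯_ν := ν + ker A_v`.  Suppose that `ker A_v ∩ R^∨ ⊆ (I - v) R^∨`.  Then the
`W̃`-conjugacy class of `b` is equal to the union over `u ∈ W` of the sets
`{ t^ξ (u v u⁻¹) : ξ ∈ (u 𝒯_ν) ∩ (η + R^∨) }`; that is, the `W̃`-conjugacy class of `b`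
fills out the transverse subspaces. -/
theorem conjugacy_class_fills_out_transverse_subspaces {n : ℕ}
    (α : Fin n → V) (hα : ∀ j, α j ≠ 0)
    (hlin : LinearIndependent ℝ α)
    -- crystallographic: the Cartan integers `⟨α_k, α_j^∨⟩` are integers
    (hcart : ∀ k j, ∃ m : ℤ, ⟪α k, coroot (α j)⟫ = (m : ℝ))
    (η : V) (hη : η ∈ coweightLattice α)
    (v : V ≃ₗ[ℝ] V) (hvW : v ∈ weylGroup α hα)
    (m : ℕ) (hm : 1 ≤ m) (hord : orderOf v = m)
    -- the hypothesis `ker A_v ∩ R^∨ ⊆ (I - v) R^∨`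
    (hcond : ∀ x ∈ LinearMap.ker (avgProj m v), x ∈ corootLattice α →
        ∃ r ∈ corootLattice α, x = r - v r) :
    {z : Aff V | ∃ μ ∈ coweightLattice α, ∃ u ∈ weylGroup α hα,
        z = Aff.mk μ u * Aff.mk η v * (Aff.mk μ u)⁻¹}
      = ⋃ u ∈ (weylGroup α hα : Set (V ≃ₗ[ℝ] V)),
          {z : Aff V | ∃ ξ,
            ξ ∈ ⇑u '' {x : V | x - avgProj m v η ∈ LinearMap.ker (avgProj m v)} ∧
            ξ - η ∈ corootLattice α ∧
            z = Aff.mk ξ (u * v * u⁻¹)} :=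
  conjugacy_class_fills_out_transverse_subspaces_general α hα hcart η hη v hvW m hord hcond

end ADLV
end

section
/- Keep the hypotheses of the preceding conjugation corollary: Φ a reduced crystallographic root system with simple roots α_1, …, α_n, w₀ ∈ W with w₀² = I and w₀ρ̌ = −ρ̌, λ, η ∈ Q^∨ with ⟨α_i, η⟩ = 1, η − λ ∈ R^∨, and proj_i(λ − 2ρ̌) = proj_i(η); set ζ := ρ̌ + w₀s_i(λ − ρ̌) and let d_i ∈ ℤ satisfy s_i w₀ ζ − η = d_i·α_i^∨. Then ⟨α_i, λ⟩ = 2d_i + 1. Moreover, writing α_{i₁} := −w₀α_i (which is again a root) and μ := d_i·w₀s_iη, one has ⟨α_{i₁}, μ⟩ = d_i. Consequently, if ⟨α_i, λ − 2ρ̌⟩ is a nonnegative odd integer, then ⟨α_i, λ⟩ ≥ 3 and d_i ≥ 1. -/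
open scoped RealInnerProductSpace

namespace ADLV

variable {V : Type*} [NormedAddCommGroup V] [InnerProductSpace ℝ V]

/-- The orthogonal projection `proj_α : x ↦ x - ½⟨α, x⟩ α^∨` of `V` onto the
hyperplane `H_α = {x : ⟨α, x⟩ = 0}`. -/
noncomputable def projH (α : V) (x : V) : V := x - (⟪α, x⟫ / 2) • coroot α

/-!
Since `s_i` negates the pairing with `α_i` and `w₀` is an involution negating `ρ̌`,
`⟨α_i, s_i w₀ ζ⟩ = -⟨α_i, -ρ̌ + s_i (λ - ρ̌)⟩ = ⟨α_i, λ⟩`; pairing `s_i w₀ ζ - η = d_i α_i^∨`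
with `α_i` thus gives `⟨α_i, λ⟩ - 1 = 2 d_i`. Since `w₀` is an isometry,
`⟨-w₀ α_i, d_i w₀ s_i η⟩ = -d_i ⟨α_i, s_i η⟩ = d_i ⟨α_i, η⟩ = d_i`.
-/

theorem inner_coroot_self {α : V} (hα : α ≠ 0) : ⟪α, coroot α⟫ = 2 := by
  have : ⟪α, α⟫ ≠ 0 := inner_self_ne_zero.mpr hα
  rw [coroot, real_inner_smul_right]
  field_simp

theorem sRefl_apply {α : V} (hα : α ≠ 0) (x : V) :
    sRefl α hα x = x - ⟪α, x⟫ • coroot α :=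
  Module.reflection_apply _ _

theorem inner_sRefl_right_self {α : V} (hα : α ≠ 0) (x : V) :
    ⟪α, sRefl α hα x⟫ = -⟪α, x⟫ := by
  rw [sRefl_apply, inner_sub_right, real_inner_smul_right, inner_coroot_self hα]
  ring

theorem inner_sRefl_sRefl {α : V} (hα : α ≠ 0) (x y : V) :
    ⟪sRefl α hα x, sRefl α hα y⟫ = ⟪x, y⟫ := by
  have : ⟪α, α⟫ ≠ 0 := inner_self_ne_zero.mpr hα
  simp only [sRefl_apply, coroot, inner_sub_left, inner_sub_right, real_inner_smul_left,
    real_inner_smul_right, real_inner_comm x α, real_inner_comm y α]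
  field_simp
  ring

theorem inner_map_map_of_mem_weylGroup {n : ℕ} {α : Fin n → V} {hα : ∀ j, α j ≠ 0}
    {g : V ≃ₗ[ℝ] V} (hg : g ∈ weylGroup α hα) (x y : V) : ⟪g x, g y⟫ = ⟪x, y⟫ := by
  induction hg using Subgroup.closure_induction generalizing x y with
  | mem g hg =>
    obtain ⟨j, rfl⟩ := hg
    exact inner_sRefl_sRefl (hα j) x y
  | one => rfl
  | mul g h _ _ hg hh => rw [LinearEquiv.mul_apply, LinearEquiv.mul_apply, hg, hh]
  | inv g _ hg =>
    rw [← hg, ← LinearEquiv.mul_apply, ← LinearEquiv.mul_apply, mul_inv_cancel]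
    rfl

theorem inner_sRefl_conj_involution {α : V} (hα : α ≠ 0) {w : V ≃ₗ[ℝ] V} (hw : w * w = 1)
    {ρ : V} (hwρ : w ρ = -ρ) (x : V) :
    ⟪α, sRefl α hα (w (ρ + w (sRefl α hα (x - ρ))))⟫ = ⟪α, x⟫ := by
  rw [inner_sRefl_right_self, map_add, hwρ, ← LinearEquiv.mul_apply, hw, LinearEquiv.coe_one, id,
    inner_add_right, inner_neg_right, inner_sRefl_right_self, inner_sub_right]
  ring

theorem positivity_of_conjugator_general {n : ℕ}
    (α : Fin n → V) (hα : ∀ j, α j ≠ 0)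
    -- `ρ̌` is the half-sum of the positive coroots, so `⟨α_j, ρ̌⟩ = 1` for all `j`
    (ρv : V) (hρ : ∀ j, ⟪α j, ρv⟫ = 1)
    (w₀ : V ≃ₗ[ℝ] V) (hw₀W : w₀ ∈ weylGroup α hα)
    (hw₀2 : w₀ * w₀ = 1) (hw₀ρ : w₀ ρv = -ρv)
    (i : Fin n) (lam η : V)
    (hηi : ⟪α i, η⟫ = 1)
    (d : ℤ)
    (hd : sRefl (α i) (hα i) (w₀ (ρv + w₀ (sRefl (α i) (hα i) (lam - ρv)))) - η
        = (d : ℝ) • coroot (α i)) :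
    ⟪α i, lam⟫ = 2 * (d : ℝ) + 1 ∧
    ⟪-(w₀ (α i)), (d : ℝ) • (w₀ (sRefl (α i) (hα i) η))⟫ = (d : ℝ) ∧
    ((∃ k : ℕ, ⟪α i, lam - (2 : ℝ) • ρv⟫ = 2 * (k : ℝ) + 1) →
      (3 : ℝ) ≤ ⟪α i, lam⟫ ∧ 1 ≤ d) := by
  have hlam : ⟪α i, lam⟫ = 2 * (d : ℝ) + 1 := by
    have h := congrArg (⟪α i, ·⟫) hd
    simp only [inner_sub_right, inner_sRefl_conj_involution (hα i) hw₀2 hw₀ρ, hηi,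
      real_inner_smul_right, inner_coroot_self (hα i)] at h
    linarith
  refine ⟨hlam, ?_, ?_⟩
  · rw [inner_neg_left, real_inner_smul_right, inner_map_map_of_mem_weylGroup hw₀W,
      inner_sRefl_right_self, hηi]
    ring
  · rintro ⟨k, hk⟩
    rw [inner_sub_right, real_inner_smul_right, hρ i, hlam] at hk
    have hd1 : (1 : ℝ) ≤ d := by linarith [(k.cast_nonneg : (0 : ℝ) ≤ k)]
    exact ⟨by linarith, by exact_mod_cast hd1⟩

/-- Keep the hypotheses of the conjugation corollary: `w₀ ∈ W` with
`w₀² = I` and `w₀ ρ̌ = -ρ̌`; `λ, η ∈ Q^∨` with `⟨α_i, η⟩ = 1`, `η - λ ∈ R^∨` and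
`proj_i (λ - 2ρ̌) = proj_i η`; `ζ := ρ̌ + w₀ s_i (λ - ρ̌)` and `d_i ∈ ℤ` with
`s_i w₀ ζ - η = d_i • α_i^∨`.  Then `⟨α_i, λ⟩ = 2 d_i + 1`.  Moreover, writing
`α_{i₁} := -w₀ α_i` and `μ := d_i • w₀ s_i η`, one has `⟨α_{i₁}, μ⟩ = d_i`.
Consequently, if `⟨α_i, λ - 2ρ̌⟩` is a nonnegative odd integer, then `⟨α_i, λ⟩ ≥ 3`
and `d_i ≥ 1`. -/
theorem positivity_of_conjugator {n : ℕ}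
    (α : Fin n → V) (hα : ∀ j, α j ≠ 0)
    (hlin : LinearIndependent ℝ α)
    -- crystallographic: the Cartan integers `⟨α_k, α_j^∨⟩` are integers
    (hcart : ∀ k j, ∃ m : ℤ, ⟪α k, coroot (α j)⟫ = (m : ℝ))
    -- `ρ̌` is the half-sum of the positive coroots, so `⟨α_j, ρ̌⟩ = 1` for all `j`
    (ρv : V) (hρ : ∀ j, ⟪α j, ρv⟫ = 1)
    (w₀ : V ≃ₗ[ℝ] V) (hw₀W : w₀ ∈ weylGroup α hα)
    (hw₀2 : w₀ * w₀ = 1) (hw₀ρ : w₀ ρv = -ρv)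
    (i : Fin n) (lam η : V)
    (hlam : lam ∈ coweightLattice α) (hη : η ∈ coweightLattice α)
    (hηi : ⟪α i, η⟫ = 1) (hηlam : η - lam ∈ corootLattice α)
    (hproj : projH (α i) (lam - (2 : ℝ) • ρv) = projH (α i) η)
    (d : ℤ)
    (hd : sRefl (α i) (hα i) (w₀ (ρv + w₀ (sRefl (α i) (hα i) (lam - ρv)))) - η
        = (d : ℝ) • coroot (α i)) :
    ⟪α i, lam⟫ = 2 * (d : ℝ) + 1 ∧
    ⟪-(w₀ (α i)), (d : ℝ) • (w₀ (sRefl (α i) (hα i) η))⟫ = (d : ℝ) ∧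
    ((∃ k : ℕ, ⟪α i, lam - (2 : ℝ) • ρv⟫ = 2 * (k : ℝ) + 1) →
      (3 : ℝ) ≤ ⟪α i, lam⟫ ∧ 1 ≤ d) :=
  positivity_of_conjugator_general α hα ρv hρ w₀ hw₀W hw₀2 hw₀ρ i lam η hηi d hd

end ADLV
end
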